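/- arXiv:1907.08251 — 4 statements merged into one kernel-verified Lean document; each statement's English description precedes it below -/
import Mathlib

section
/- Let τ ∈ prefixes(S) \ S be a valid non-maximal prefix trace and P ⊆ S a maximal trace property. If for every event e such that τ++[e] ∈ prefixes(S) we have τ++[e] ∈ α(P), then τ ∈ α(P). (One-step backward closure of prediction trace properties.) -/
variable {E : Type*}

def prefixes (P : Set (List E)) : Set (List E) := {σ | ∃ τ ∈ P, σ <+: τ}

def predAbs (S P : Set (List E)) : Set (List E) :=
  {σ | σ ∈ prefixes P ∧ ∀ σ' ∈ S, σ <+: σ' → σ' ∈ P}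

def gammaConc (S Q : Set (List E)) : Set (List E) := Q ∩ S

def inquiry (S : Set (List E)) (L : Set (Set (List E))) (σ : List E) : Set (List E) :=
  ⋂₀ {P | P ∈ L ∧ σ ∈ predAbs S P}

theorem List.IsPrefix.exists_append_singleton_prefix {α : Type*} {l₁ l₂ : List α}
    (h : l₁ <+: l₂) (hne : l₁ ≠ l₂) : ∃ a, l₁ ++ [a] <+: l₂ :=
  ⟨_, List.concat_get_prefix h (lt_of_le_of_ne h.length_le fun hl => hne (h.eq_of_length hl))⟩

theorem mem_prefixes_of_prefix {P : Set (List E)} {σ ρ : List E} (hσ : σ <+: ρ)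
    (hρ : ρ ∈ prefixes P) : σ ∈ prefixes P :=
  let ⟨τ, hτ, hρτ⟩ := hρ
  ⟨τ, hτ, hσ.trans hρτ⟩

theorem predAbs_backward_closure_general (S P : Set (List E))
    (τ : List E) (hτ : τ ∈ prefixes S) (hτm : τ ∉ S)
    (h : ∀ e : E, τ ++ [e] ∈ prefixes S → τ ++ [e] ∈ predAbs S P) :
    τ ∈ predAbs S P := by
  have extend : ∀ σ' ∈ S, τ <+: σ' → ∃ e, τ ++ [e] <+: σ' ∧ τ ++ [e] ∈ predAbs S P := by
    intro σ' hσ' hpre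
    obtain ⟨e, he⟩ := hpre.exists_append_singleton_prefix fun heq => hτm (heq ▸ hσ')
    exact ⟨e, he, h e ⟨σ', hσ', he⟩⟩
  refine ⟨?_, fun σ' hσ' hpre => ?_⟩
  · obtain ⟨σ', hσ', hpre⟩ := hτ
    obtain ⟨e, -, he⟩ := extend σ' hσ' hpre
    exact mem_prefixes_of_prefix (List.prefix_append τ [e]) he.1
  · obtain ⟨e, hpre', he⟩ := extend σ' hσ' hpre
    exact he.2 σ' hσ' hpre'

theorem predAbs_backward_closure (S P : Set (List E)) (hP : P ⊆ S)
    (τ : List E) (hτ : τ ∈ prefixes S) (hτm : τ ∉ S)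
    (h : ∀ e : E, τ ++ [e] ∈ prefixes S → τ ++ [e] ∈ predAbs S P) :
    τ ∈ predAbs S P :=
  predAbs_backward_closure_general S P τ hτ hτm h
end

section
/- For a valid non-maximal trace σ ∈ prefixes(S) \ S, the set {P ∈ L | σ ∈ α(P)} equals the intersection over all events e with σ++[e] ∈ prefixes(S) of the sets {P ∈ L | σ++[e] ∈ α(P)}: i.e., σ ∈ α(P) if and only if for every event e with σ++[e] ∈ prefixes(S), σ++[e] ∈ α(P). -/
variable {E : Type*}

/-
σ ∈ α(P) says that every maximal extension of σ lies in P, and this is inherited by every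
valid extension of σ. Conversely, a maximal extension of a non-maximal σ is a proper
extension, so it extends some one-step extension σ ++ [e], which is valid; hence
σ ++ [e] ∈ α(P) puts it in P.
-/

theorem List.IsPrefix.exists_append_singleton_prefix_of_ne {σ τ : List E}
    (h : σ <+: τ) (hne : σ ≠ τ) : ∃ e : E, σ ++ [e] <+: τ := by
  obtain ⟨t, rfl⟩ := h
  cases t with
  | nil => simp at hne
  | cons e t => exact ⟨e, t, by simp⟩

section predAbs

variable {S P : Set (List E)} {σ τ : List E}

theorem mem_predAbs_of_forall_mem (hσ : σ ∈ prefixes S)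
    (hcl : ∀ σ' ∈ S, σ <+: σ' → σ' ∈ P) : σ ∈ predAbs S P := by
  obtain ⟨τ, hτS, hστ⟩ := hσ
  exact ⟨⟨τ, hcl τ hτS hστ, hστ⟩, hcl⟩

theorem mem_predAbs_of_prefix (hσ : σ ∈ predAbs S P) (hστ : σ <+: τ)
    (hτ : τ ∈ prefixes S) : τ ∈ predAbs S P :=
  mem_predAbs_of_forall_mem hτ fun σ' hσ' hτσ' => hσ.2 σ' hσ' (hστ.trans hτσ')

theorem mem_predAbs_of_forall_step (hσ : σ ∈ prefixes S) (hσm : σ ∉ S)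
    (hstep : ∀ e : E, σ ++ [e] ∈ prefixes S → σ ++ [e] ∈ predAbs S P) :
    σ ∈ predAbs S P := by
  refine mem_predAbs_of_forall_mem hσ fun τ hτS hστ => ?_
  obtain ⟨e, he⟩ := hστ.exists_append_singleton_prefix_of_ne
    fun h => hσm (h ▸ hτS)
  exact (hstep e ⟨τ, hτS, he⟩).2 τ hτS he

end predAbs

theorem predAbs_one_step_iff_general (S P : Set (List E)) (σ : List E)
    (hσ : σ ∈ prefixes S) (hσm : σ ∉ S) :
    σ ∈ predAbs S P ↔
      ∀ e : E, σ ++ [e] ∈ prefixes S → σ ++ [e] ∈ predAbs S P :=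
  ⟨fun h _ he => mem_predAbs_of_prefix h (List.prefix_append σ _) he,
    mem_predAbs_of_forall_step hσ hσm⟩

theorem predAbs_one_step_iff (S P : Set (List E)) (L : Set (Set (List E)))
    (hP : P ⊆ S) (hPL : P ∈ L) (σ : List E)
    (hσ : σ ∈ prefixes S) (hσm : σ ∉ S) :
    σ ∈ predAbs S P ↔
      ∀ e : E, σ ++ [e] ∈ prefixes S → σ ++ [e] ∈ predAbs S P :=
  predAbs_one_step_iff_general S P σ hσ hσm
end

section
/- Suppose the observation O(σ) of a trace σ satisfies O(σ) ⊆ B for a behavior B ⊆ S, where O(σ) = ⋃_{σ' ∈ ω(σ)} I(σ'), ω is extensive, each nonempty I(σ') is guaranteed by σ' in the sense that every maximal trace extending σ' lies in I(σ'), and σ ∈ prefixes(S). Then every maximal trace σ'' ∈ S with σ ⪯ σ'' satisfies σ'' ∈ B. -/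
/-!
The inquiry `I(σ)` is an intersection of properties `P` whose abstraction `α(P)` contains `σ`,
and membership of `σ` in `α(P)` already says that every maximal extension of `σ` lies in `P`.
So every maximal extension of `σ` lies in `I(σ)`, which is part of the observation `O(σ)` because
the cognizance function is extensive.
-/

variable {E : Type*}

/-- Holds even when no property of `L` is guaranteed by `σ`: then `inquiry S L σ` is `univ`. -/
theorem mem_inquiry_of_isPrefix {S : Set (List E)} {L : Set (Set (List E))} {σ σ'' : List E}
    (hS : σ'' ∈ S) (hpre : σ <+: σ'') : σ'' ∈ inquiry S L σ :=
  Set.mem_sInter.2 fun _ hP => hP.2.2 _ hS hpre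

theorem observation_guarantee_general (S : Set (List E)) (L : Set (Set (List E)))
    (ω : List E → Set (List E))
    (hext : ∀ σ : List E, σ ∈ ω σ)
    (B : Set (List E)) (σ : List E)
    (hO : (⋃ σ' ∈ ω σ, inquiry S L σ') ⊆ B) :
    ∀ σ'' ∈ S, σ <+: σ'' → σ'' ∈ B :=
  fun _ hS hpre =>
    hO (Set.subset_biUnion_of_mem (u := inquiry S L) (hext σ) (mem_inquiry_of_isPrefix hS hpre))

theorem observation_guarantee (S : Set (List E)) (L : Set (Set (List E)))
    (hL : ∀ P ∈ L, P ⊆ S) (ω : List E → Set (List E))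
    (hext : ∀ σ : List E, σ ∈ ω σ)
    (hguar : ∀ σ' : List E, (inquiry S L σ').Nonempty →
      ∀ σ'' ∈ S, σ' <+: σ'' → σ'' ∈ inquiry S L σ')
    (B : Set (List E)) (hB : B ⊆ S) (σ : List E) (hσ : σ ∈ prefixes S)
    (hO : (⋃ σ' ∈ ω σ, inquiry S L σ') ⊆ B) :
    ∀ σ'' ∈ S, σ <+: σ'' → σ'' ∈ B :=
  observation_guarantee_general S L ω hext B σ hO
end

section
/- If an event R is determined by its history, i.e., for all events e, e' such that H·[e] ∈ prefixes(S) and H·[e'] ∈ prefixes(S) we have e = e', then R cannot be responsible for any behavior B with respect to an observation O satisfying the one-step decomposition O(H) = ⋃{O(H·[e]) | H·[e] ∈ prefixes(S)}: there is no behavior B with ∅ ⊊ O(H·R) ⊆ B ⊊ O(H) for H·R ∈ prefixes(S). -/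
variable {E : Type*}

theorem observation_eq_of_determined {S : Set (List E)} {O : List E → Set (List E)}
    {H : List E} {e₀ : E} (hR : H ++ [e₀] ∈ prefixes S)
    (hdet : ∀ e e' : E, H ++ [e] ∈ prefixes S → H ++ [e'] ∈ prefixes S → e = e')
    (hdec : O H = ⋃ e ∈ {e : E | H ++ [e] ∈ prefixes S}, O (H ++ [e])) :
    O H = O (H ++ [e₀]) := by
  have hsingle : {e : E | H ++ [e] ∈ prefixes S} = {e₀} :=
    Set.eq_singleton_iff_unique_mem.2 ⟨hR, fun e he => hdet e e₀ he hR⟩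
  rw [hdec, hsingle, Set.biUnion_singleton]

theorem determined_not_responsible_general (S : Set (List E))
    (O : List E → Set (List E)) (H : List E) (e₀ : E)
    (hR : H ++ [e₀] ∈ prefixes S)
    (hdet : ∀ e e' : E, H ++ [e] ∈ prefixes S → H ++ [e'] ∈ prefixes S → e = e')
    (hdec : O H = ⋃ e ∈ {e : E | H ++ [e] ∈ prefixes S}, O (H ++ [e])) :
    ¬ ∃ B : Set (List E), B ⊆ S ∧ (O (H ++ [e₀])).Nonempty ∧
        O (H ++ [e₀]) ⊆ B ∧ B ⊂ O H := by
  rintro ⟨B, -, -, hOB, hBO⟩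
  rw [observation_eq_of_determined hR hdet hdec] at hBO
  exact hBO.not_subset hOB

theorem determined_not_responsible (S : Set (List E))
    (O : List E → Set (List E)) (H : List E) (e₀ : E)
    (hH : H ∈ prefixes S) (hHm : H ∉ S)
    (hR : H ++ [e₀] ∈ prefixes S)
    (hdet : ∀ e e' : E, H ++ [e] ∈ prefixes S → H ++ [e'] ∈ prefixes S → e = e')
    (hdec : O H = ⋃ e ∈ {e : E | H ++ [e] ∈ prefixes S}, O (H ++ [e])) :
    ¬ ∃ B : Set (List E), B ⊆ S ∧ (O (H ++ [e₀])).Nonempty ∧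
        O (H ++ [e₀]) ⊆ B ∧ B ⊂ O H :=
  determined_not_responsible_general S O H e₀ hR hdet hdec
end
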